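/- arXiv:1010.1163 — 2 statements merged into one kernel-verified Lean document; each statement's English description precedes it below -/
import Mathlib

section
/- Let M ≥ 1 and let x : Fin M → ℂ be injective. Then for every σ > 0 the constellation-constrained secrecy capacity tends to zero at high SNR: C_σ(s) → 0 as s → ∞. -/
open MeasureTheory Real

/-- The standard complex Gaussian probability measure on ℂ:
density `w ↦ (1/π)·exp(−|w|²)` with respect to Lebesgue measure on ℂ ≅ ℝ². -/
noncomputable def gaussianC : Measure ℂ :=
  MeasureTheory.volume.withDensity
    (fun w => ENNReal.ofReal (π⁻¹ * Real.exp (-(‖w‖) ^ 2)))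

/-- The expectation term
`g_i(σ, s) = ∫_ℂ log₂( Σ_j exp( −|σ·w + √s·(x i − x j)|² / σ² ) ) dγ(w)`. -/
noncomputable def g (M : ℕ) (x : Fin M → ℂ) (σ s : ℝ) (i : Fin M) : ℝ :=
  ∫ w : ℂ,
    Real.logb 2 (∑ j : Fin M,
      Real.exp (-(‖(σ : ℂ) * w + (Real.sqrt s : ℂ) * (x i - x j)‖) ^ 2 / σ ^ 2))
    ∂gaussianC

/-- The constellation-constrained secrecy capacity
`C_σ(s) = (1/M)·Σ_i ( g_i(σ, s) − g_i(1, s) )`. -/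
noncomputable def Ccc (M : ℕ) (x : Fin M → ℂ) (σ s : ℝ) : ℝ :=
  (1 / (M : ℝ)) * ∑ i : Fin M, (g M x σ s i - g M x 1 s i)


/-!
For each `i`, as `s → ∞` the sum inside the logarithm of `g_i(σ, s)` tends to its `j = i` term
`exp(−|w|²)`, because the constellation points are distinct; this limit does not depend on `σ`.
The sum lies between `exp(−|w|²)` and `M`, so `|log₂|` of it is dominated by
`log₂ M + |w|² / log 2`, which is integrable for the Gaussian measure. By dominated convergence
`g_i(σ, s)` and `g_i(1, s)` have the same limit, and their difference tends to `0`.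
-/

open Filter Topology

section
variable {V : Type*} [NormedAddCommGroup V] [InnerProductSpace ℝ V] [FiniteDimensional ℝ V]
  [MeasurableSpace V] [BorelSpace V]

lemma integrable_rexp_neg_mul_sq_norm {b : ℝ} (hb : 0 < b) :
    Integrable (fun v : V => rexp (-b * ‖v‖ ^ 2)) :=
  .of_integral_ne_zero (by rw [GaussianFourier.integral_rexp_neg_mul_sq_norm hb]; positivity)

end

lemma integral_density_gaussianC : ∫ w : ℂ, π⁻¹ * rexp (-‖w‖ ^ 2) = 1 := by
  have := GaussianFourier.integral_rexp_neg_mul_sq_norm (V := ℂ) one_pos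
  simp_all [integral_const_mul, Complex.finrank_real_complex, pi_ne_zero]

instance isProbabilityMeasure_gaussianC : IsProbabilityMeasure gaussianC := by
  constructor
  have hint : Integrable (fun w : ℂ => π⁻¹ * rexp (-‖w‖ ^ 2)) := by
    simpa using (integrable_rexp_neg_mul_sq_norm (V := ℂ) one_pos).const_mul π⁻¹
  rw [gaussianC, withDensity_apply _ MeasurableSet.univ, Measure.restrict_univ,
    ← ofReal_integral_eq_lintegral_ofReal hint (ae_of_all _ fun w => by positivity),
    integral_density_gaussianC, ENNReal.ofReal_one]

lemma le_two_mul_exp_half (t : ℝ) : t ≤ 2 * rexp (t / 2) := by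
  linarith [add_one_le_exp (t / 2), exp_pos (t / 2)]

lemma integrable_norm_sq_gaussianC : Integrable (fun w : ℂ => ‖w‖ ^ 2) gaussianC := by
  have hdens : Measurable fun w : ℂ => ENNReal.ofReal (π⁻¹ * rexp (-‖w‖ ^ 2)) := by
    fun_prop
  rw [gaussianC, integrable_withDensity_iff hdens (ae_of_all _ fun _ => ENNReal.ofReal_lt_top)]
  refine ((integrable_rexp_neg_mul_sq_norm (V := ℂ) (b := 1 / 2) (by norm_num)).const_mul
    (2 * π⁻¹)).mono' (by fun_prop) (ae_of_all _ fun w => ?_)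
  rw [ENNReal.toReal_ofReal (by positivity), norm_of_nonneg (by positivity)]
  calc ‖w‖ ^ 2 * (π⁻¹ * rexp (-‖w‖ ^ 2))
      ≤ 2 * rexp (‖w‖ ^ 2 / 2) * (π⁻¹ * rexp (-‖w‖ ^ 2)) := by
        gcongr; exact le_two_mul_exp_half _
    _ = 2 * π⁻¹ * rexp (-(1 / 2) * ‖w‖ ^ 2) := by
        rw [show -(1 / 2) * ‖w‖ ^ 2 = ‖w‖ ^ 2 / 2 + -‖w‖ ^ 2 by ring, exp_add]; ring

lemma norm_real_mul_sq_div_sq {σ : ℝ} (hσ : σ ≠ 0) (w : ℂ) :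
    ‖(σ : ℂ) * w‖ ^ 2 / σ ^ 2 = ‖w‖ ^ 2 := by
  rw [norm_mul, Complex.norm_real, mul_pow, norm_eq_abs, sq_abs,
    mul_div_cancel_left₀ _ (pow_ne_zero 2 hσ)]

lemma tendsto_norm_add_sqrt_mul_atTop (a : ℂ) {d : ℂ} (hd : d ≠ 0) :
    Tendsto (fun s : ℝ => ‖a + (√s : ℂ) * d‖) atTop atTop := by
  have hlin : Tendsto (fun s : ℝ => √s * ‖d‖ - ‖a‖) atTop atTop :=
    tendsto_atTop_add_const_right _ _ (tendsto_sqrt_atTop.atTop_mul_const (norm_pos_iff.mpr hd))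
  refine tendsto_atTop_mono (fun s => ?_) hlin
  have := norm_sub_norm_le ((√s : ℂ) * d) (-a)
  rw [sub_neg_eq_add, norm_neg, norm_mul, Complex.norm_real, norm_of_nonneg (sqrt_nonneg s),
    add_comm] at this
  exact this

lemma tendsto_exp_neg_norm_add_sqrt_mul_sq_div (a : ℂ) {d : ℂ} (hd : d ≠ 0) {σ : ℝ}
    (hσ : σ ≠ 0) :
    Tendsto (fun s : ℝ => rexp (-‖a + (√s : ℂ) * d‖ ^ 2 / σ ^ 2)) atTop (𝓝 0) := by
  have hsq := ((tendsto_pow_atTop two_ne_zero).comp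
    (tendsto_norm_add_sqrt_mul_atTop a hd)).atTop_div_const (by positivity : 0 < σ ^ 2)
  simp_rw [neg_div]
  exact tendsto_exp_atBot.comp (tendsto_neg_atTop_atBot.comp hsq)

section
variable {ι : Type*} [Fintype ι] (x : ι → ℂ) (σ s : ℝ) (i : ι) (w : ℂ)

noncomputable def likelihoodSum : ℝ :=
  ∑ j, rexp (-‖(σ : ℂ) * w + (√s : ℂ) * (x i - x j)‖ ^ 2 / σ ^ 2)

lemma likelihoodSum_pos : 0 < likelihoodSum x σ s i w :=
  Finset.sum_pos (fun _ _ => exp_pos _) ⟨i, Finset.mem_univ i⟩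

lemma likelihoodSum_le_card : likelihoodSum x σ s i w ≤ Fintype.card ι := by
  rw [likelihoodSum, ← nsmul_one, ← Finset.card_univ, ← Finset.sum_const]
  refine Finset.sum_le_sum fun j _ => exp_le_one_iff.mpr ?_
  rw [neg_div]
  exact neg_nonpos.mpr (by positivity)

lemma continuous_likelihoodSum : Continuous (likelihoodSum x σ s i) := by
  unfold likelihoodSum; fun_prop

variable {σ}

lemma exp_neg_norm_sq_le_likelihoodSum (hσ : σ ≠ 0) :
    rexp (-‖w‖ ^ 2) ≤ likelihoodSum x σ s i w := by
  have := Finset.single_le_sum (fun j _ => (exp_pos _).le) (Finset.mem_univ i)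
    (f := fun j => rexp (-‖(σ : ℂ) * w + (√s : ℂ) * (x i - x j)‖ ^ 2 / σ ^ 2))
  rwa [sub_self, mul_zero, add_zero, neg_div, norm_real_mul_sq_div_sq hσ] at this

lemma abs_logb_likelihoodSum_le (hσ : σ ≠ 0) :
    |logb 2 (likelihoodSum x σ s i w)| ≤ logb 2 (Fintype.card ι) + ‖w‖ ^ 2 / log 2 := by
  have hpos := likelihoodSum_pos x σ s i w
  have hupper := logb_le_logb_of_le one_lt_two hpos (likelihoodSum_le_card x σ s i w)
  have hlower := logb_le_logb_of_le one_lt_two (exp_pos _)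
    (exp_neg_norm_sq_le_likelihoodSum x s i w hσ)
  rw [logb, log_exp, neg_div] at hlower
  have hcard : 0 ≤ logb 2 (Fintype.card ι) :=
    logb_nonneg one_lt_two (by exact_mod_cast Fintype.card_pos_iff.mpr ⟨i⟩)
  have : 0 ≤ ‖w‖ ^ 2 / log 2 := by positivity
  rw [abs_le]
  constructor <;> linarith

lemma tendsto_likelihoodSum (hx : Function.Injective x) (hσ : σ ≠ 0) :
    Tendsto (fun s => likelihoodSum x σ s i w) atTop (𝓝 (rexp (-‖w‖ ^ 2))) := by
  classical
  have hterm : ∀ j, Tendsto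
      (fun s : ℝ => rexp (-‖(σ : ℂ) * w + (√s : ℂ) * (x i - x j)‖ ^ 2 / σ ^ 2)) atTop
      (𝓝 (if i = j then rexp (-‖w‖ ^ 2) else 0)) := by
    intro j
    split_ifs with hij
    · subst hij
      simp only [sub_self, mul_zero, add_zero, neg_div, norm_real_mul_sq_div_sq hσ]
      exact tendsto_const_nhds
    · exact tendsto_exp_neg_norm_add_sqrt_mul_sq_div _ (sub_ne_zero.mpr (hx.ne hij)) hσ
  simpa [likelihoodSum] using tendsto_finsetSum Finset.univ fun j _ => hterm j
end

lemma tendsto_g {M : ℕ} {x : Fin M → ℂ} (hx : Function.Injective x) {σ : ℝ}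
    (hσ : σ ≠ 0) (i : Fin M) :
    Tendsto (fun s => g M x σ s i) atTop
      (𝓝 (∫ w, logb 2 (rexp (-‖w‖ ^ 2)) ∂gaussianC)) := by
  show Tendsto (fun s => ∫ w, logb 2 (likelihoodSum x σ s i w) ∂gaussianC) _ _
  have hbound : Integrable (fun w : ℂ => logb 2 M + ‖w‖ ^ 2 / log 2) gaussianC :=
    (integrable_const _).add (integrable_norm_sq_gaussianC.div_const _)
  refine tendsto_integral_filter_of_dominated_convergence _
    (Eventually.of_forall fun s => ?_)
    (Eventually.of_forall fun s => ae_of_all _ fun w => ?_) hbound (ae_of_all _ fun w => ?_)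
  · exact ((continuous_likelihoodSum x σ s i).logb
      fun w => (likelihoodSum_pos x σ s i w).ne').aestronglyMeasurable
  · simpa using abs_logb_likelihoodSum_le x s i w hσ
  · exact (continuousAt_logb (exp_pos _).ne').tendsto.comp (tendsto_likelihoodSum x i w hx hσ)

theorem ccsc_tendsto_zero_at_high_snr_general (M : ℕ) (x : Fin M → ℂ)
    (hx : Function.Injective x) (σ : ℝ) (hσ : 0 < σ) :
    Filter.Tendsto (fun s => Ccc M x σ s) Filter.atTop (nhds 0) := by
  have hdiff : ∀ i, Tendsto (fun s => g M x σ s i - g M x 1 s i) atTop (𝓝 0) := fun i => by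
    simpa using (tendsto_g hx hσ.ne' i).sub (tendsto_g hx one_ne_zero i)
  simpa [Ccc] using (tendsto_finsetSum Finset.univ fun i _ => hdiff i).const_mul (1 / (M : ℝ))

theorem ccsc_tendsto_zero_at_high_snr (M : ℕ) (hM : 1 ≤ M) (x : Fin M → ℂ)
    (hx : Function.Injective x) (σ : ℝ) (hσ : 0 < σ) :
    Filter.Tendsto (fun s => Ccc M x σ s) Filter.atTop (nhds 0) :=
  ccsc_tendsto_zero_at_high_snr_general M x hx σ hσ
end

section
/- Let M ≥ 1, x : Fin M → ℂ, σ > 0 and s ≥ 0, and let p : ℂ → ℝ be the output density p(y) = (1/(M·π·σ²))·Σ_{i=0}^{M−1} exp( −|y − √s·x i|² / σ² ). Then the differential entropy of the channel output satisfies −∫_ℂ p(y)·log₂ p(y) dy = log₂ M + log₂(π·σ²) − (1/M)·Σ_{i=0}^{M−1} g_i(σ, s), where the integral is with respect to Lebesgue measure on ℂ ≅ ℝ². -/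
/-!
Write `p = S / (M π σ²)` with `S y = ∑ᵢ exp (-|y - √s xᵢ|² / σ²)`. Each summand integrates to
`π σ²`, so `∫ p = 1` and `-∫ p log₂ p` equals `log₂ (M π σ²)` minus
`(M π σ²)⁻¹ ∑ᵢ ∫ exp (-|y - √s xᵢ|² / σ²) log₂ S y dy`. The substitution `y = σ w + √s xᵢ` turns
the `i`-th integral into `π σ² gᵢ(σ, s)`. All integrals exist because `log S` is squeezed between
`-|y - √s xᵢ|² / σ²` and `log M`.
-/

open MeasureTheory Real

open Finset

lemma mul_exp_neg_le_two_mul_exp_neg_half (u : ℝ) : u * rexp (-u) ≤ 2 * rexp (-(u / 2)) := by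
  have hsplit : rexp (-u) = rexp (-(u / 2)) * rexp (-(u / 2)) := by rw [← exp_add]; ring_nf
  calc u * rexp (-u) = 2 * (u / 2 * rexp (-(u / 2))) * rexp (-(u / 2)) := by rw [hsplit]; ring
    _ ≤ 2 * (rexp (u / 2) * rexp (-(u / 2))) * rexp (-(u / 2)) := by
        gcongr; linarith [add_one_le_exp (u / 2)]
    _ = 2 * rexp (-(u / 2)) := by rw [← exp_add, add_neg_cancel, exp_zero, mul_one]

lemma neg_sq_div_sq (t σ : ℝ) : -t ^ 2 / σ ^ 2 = -(σ ^ 2)⁻¹ * t ^ 2 := by ring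

lemma integral_const_mul_mul_logb_const_mul {α : Type*} [MeasurableSpace α] {μ : Measure α}
    {C : ℝ} (hC : C ≠ 0) {f : α → ℝ} (hf : ∀ a, f a ≠ 0) (hfi : Integrable f μ) (b : ℝ)
    (hfl : Integrable (fun a => f a * logb b (f a)) μ) :
    ∫ a, C * f a * logb b (C * f a) ∂μ =
      C * logb b C * ∫ a, f a ∂μ + C * ∫ a, f a * logb b (f a) ∂μ := by
  have h : ∀ a, C * f a * logb b (C * f a) = C * logb b C * f a + C * (f a * logb b (f a)) :=
    fun a => by rw [logb_mul hC (hf a)]; ring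
  simp_rw [h]
  rw [integral_add (hfi.const_mul _) (hfl.const_mul _), integral_const_mul, integral_const_mul]

section GaussianMixture

variable {V ι : Type*} [NormedAddCommGroup V] [Fintype ι]

noncomputable def gaussianMixture (σ : ℝ) (c : ι → V) (y : V) : ℝ :=
  ∑ i, rexp (-‖y - c i‖ ^ 2 / σ ^ 2)

lemma exp_le_gaussianMixture (σ : ℝ) (c : ι → V) (y : V) (i : ι) :
    rexp (-‖y - c i‖ ^ 2 / σ ^ 2) ≤ gaussianMixture σ c y :=
  single_le_sum (f := fun j => rexp (-‖y - c j‖ ^ 2 / σ ^ 2))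
    (fun _ _ => (exp_pos _).le) (mem_univ i)

lemma gaussianMixture_pos [Nonempty ι] (σ : ℝ) (c : ι → V) (y : V) :
    0 < gaussianMixture σ c y :=
  (exp_pos _).trans_le (exp_le_gaussianMixture σ c y (Classical.arbitrary ι))

lemma gaussianMixture_le_card (σ : ℝ) (c : ι → V) (y : V) :
    gaussianMixture σ c y ≤ Fintype.card ι := by
  calc gaussianMixture σ c y ≤ ∑ _i : ι, (1 : ℝ) :=
        sum_le_sum fun i _ => exp_le_one_iff.2 <| by
          rw [neg_div, neg_nonpos]; positivity
    _ = Fintype.card ι := by simp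

lemma continuous_gaussianMixture (σ : ℝ) (c : ι → V) : Continuous (gaussianMixture σ c) := by
  unfold gaussianMixture; fun_prop

lemma abs_log_gaussianMixture_le [Nonempty ι] (σ : ℝ) (c : ι → V) (y : V) (i : ι) :
    |log (gaussianMixture σ c y)| ≤ log (Fintype.card ι) + ‖y - c i‖ ^ 2 / σ ^ 2 := by
  have hlower : -(‖y - c i‖ ^ 2 / σ ^ 2) ≤ log (gaussianMixture σ c y) := by
    rw [← neg_div, ← log_exp (-‖y - c i‖ ^ 2 / σ ^ 2)]
    exact log_le_log (exp_pos _) (exp_le_gaussianMixture σ c y i)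
  have hupper := log_le_log (gaussianMixture_pos σ c y) (gaussianMixture_le_card σ c y)
  have hcard : 0 ≤ log (Fintype.card ι) := log_nonneg (by exact_mod_cast Fintype.card_pos)
  have hu : 0 ≤ ‖y - c i‖ ^ 2 / σ ^ 2 := by positivity
  exact abs_le.2 ⟨by linarith, by linarith⟩

lemma gaussianMixture_mul_logb (σ : ℝ) (c : ι → V) (b : ℝ) (y : V) :
    gaussianMixture σ c y * logb b (gaussianMixture σ c y) =
      ∑ i, rexp (-‖y - c i‖ ^ 2 / σ ^ 2) * logb b (gaussianMixture σ c y) :=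
  sum_mul _ _ _

variable [InnerProductSpace ℝ V] [FiniteDimensional ℝ V] [MeasurableSpace V] [BorelSpace V]

lemma integral_exp_neg_mul_sq_norm_sub {b : ℝ} (hb : 0 < b) (c : V) :
    ∫ y : V, rexp (-b * ‖y - c‖ ^ 2) = (π / b) ^ (Module.finrank ℝ V / 2 : ℝ) := by
  rw [integral_sub_right_eq_self (fun y => rexp (-b * ‖y‖ ^ 2)) c,
    GaussianFourier.integral_rexp_neg_mul_sq_norm hb]

lemma integrable_exp_neg_mul_sq_norm_sub {b : ℝ} (hb : 0 < b) (c : V) :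
    Integrable fun y : V => rexp (-b * ‖y - c‖ ^ 2) :=
  Integrable.of_integral_ne_zero <| by
    rw [integral_exp_neg_mul_sq_norm_sub hb c]; positivity

lemma integral_exp_neg_sq_norm_sub_div_sq {σ : ℝ} (hσ : σ ≠ 0) (c : V) :
    ∫ y : V, rexp (-‖y - c‖ ^ 2 / σ ^ 2) = (π * σ ^ 2) ^ (Module.finrank ℝ V / 2 : ℝ) := by
  simp_rw [neg_sq_div_sq, integral_exp_neg_mul_sq_norm_sub (by positivity : 0 < (σ ^ 2)⁻¹),
    div_inv_eq_mul]

lemma integrable_exp_neg_sq_norm_sub_div_sq {σ : ℝ} (hσ : σ ≠ 0) (c : V) :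
    Integrable fun y : V => rexp (-‖y - c‖ ^ 2 / σ ^ 2) := by
  simp_rw [neg_sq_div_sq]
  exact integrable_exp_neg_mul_sq_norm_sub (by positivity) c

lemma integral_exp_neg_sq_norm_sub_div_sq_smul {E : Type*} [NormedAddCommGroup E]
    [NormedSpace ℝ E] {σ : ℝ} (hσ : σ ≠ 0) (c : V) (F : V → E) :
    ∫ y : V, rexp (-‖y - c‖ ^ 2 / σ ^ 2) • F y =
      |σ| ^ Module.finrank ℝ V • ∫ w : V, rexp (-‖w‖ ^ 2) • F (σ • w + c) := by
  set h : V → E := fun w => rexp (-‖w‖ ^ 2) • F (σ • w + c)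
  have hy : ∀ y, rexp (-‖y - c‖ ^ 2 / σ ^ 2) • F y = h (σ⁻¹ • (y - c)) := fun y => by
    simp only [h, smul_inv_smul₀ hσ, sub_add_cancel, norm_smul, norm_inv, Real.norm_eq_abs,
      mul_pow, inv_pow, sq_abs]
    ring_nf
  simp_rw [hy]
  rw [integral_sub_right_eq_self (fun y => h (σ⁻¹ • y)) c, Measure.integral_comp_inv_smul,
    abs_pow]

lemma integrable_gaussianMixture {σ : ℝ} (hσ : σ ≠ 0) (c : ι → V) :
    Integrable (gaussianMixture σ c) :=
  integrable_finsetSum _ fun i _ => integrable_exp_neg_sq_norm_sub_div_sq hσ (c i)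

lemma integral_gaussianMixture {σ : ℝ} (hσ : σ ≠ 0) (c : ι → V) :
    ∫ y, gaussianMixture σ c y =
      Fintype.card ι * (π * σ ^ 2) ^ (Module.finrank ℝ V / 2 : ℝ) := by
  simp only [gaussianMixture]
  rw [integral_finsetSum _ fun i _ => integrable_exp_neg_sq_norm_sub_div_sq hσ (c i)]
  simp [integral_exp_neg_sq_norm_sub_div_sq hσ]

/-- With `u = ‖y - c i‖² / σ²` one has `|log S| ≤ log |ι| + u`, and `u e⁻ᵘ ≤ 2 e^(-u/2)` turns this
into an integrable Gaussian majorant. -/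
lemma integrable_exp_mul_log_gaussianMixture [Nonempty ι] {σ : ℝ} (hσ : σ ≠ 0) (c : ι → V)
    (i : ι) :
    Integrable fun y : V => rexp (-‖y - c i‖ ^ 2 / σ ^ 2) * log (gaussianMixture σ c y) := by
  have hb : 0 < (σ ^ 2)⁻¹ / 2 := by positivity
  refine Integrable.mono'
    (((integrable_exp_neg_sq_norm_sub_div_sq hσ (c i)).mul_const (log (Fintype.card ι))).add
      ((integrable_exp_neg_mul_sq_norm_sub hb (c i)).const_mul 2)) ?_ ?_
  · exact (by fun_prop : Continuous fun y => rexp (-‖y - c i‖ ^ 2 / σ ^ 2)).aestronglyMeasurable.mul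
      ((continuous_gaussianMixture σ c).log
        fun y => (gaussianMixture_pos σ c y).ne').aestronglyMeasurable
  refine Filter.Eventually.of_forall fun y => ?_
  set u := ‖y - c i‖ ^ 2 / σ ^ 2
  have hu : -‖y - c i‖ ^ 2 / σ ^ 2 = -u := neg_div _ _
  have hhalf : -((σ ^ 2)⁻¹ / 2) * ‖y - c i‖ ^ 2 = -(u / 2) := by simp only [u]; ring
  simp only [hu, norm_mul, norm_eq_abs, abs_exp]
  calc rexp (-u) * |log (gaussianMixture σ c y)| ≤ rexp (-u) * (log (Fintype.card ι) + u) :=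
        mul_le_mul_of_nonneg_left (abs_log_gaussianMixture_le σ c y i) (exp_pos _).le
    _ ≤ rexp (-u) * log (Fintype.card ι) + 2 * rexp (-(u / 2)) := by
        linarith [mul_exp_neg_le_two_mul_exp_neg_half u]
    _ = _ := by simp only [Pi.add_apply, hu, hhalf]

lemma integrable_exp_mul_logb_gaussianMixture [Nonempty ι] {σ : ℝ} (hσ : σ ≠ 0) (c : ι → V)
    (b : ℝ) (i : ι) :
    Integrable fun y : V => rexp (-‖y - c i‖ ^ 2 / σ ^ 2) * logb b (gaussianMixture σ c y) := by
  simpa only [logb, mul_div_assoc] using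
    (integrable_exp_mul_log_gaussianMixture hσ c i).div_const (log b)

lemma integrable_gaussianMixture_mul_logb [Nonempty ι] {σ : ℝ} (hσ : σ ≠ 0) (c : ι → V)
    (b : ℝ) :
    Integrable fun y => gaussianMixture σ c y * logb b (gaussianMixture σ c y) := by
  simp_rw [gaussianMixture_mul_logb]
  exact integrable_finsetSum _ fun i _ => integrable_exp_mul_logb_gaussianMixture hσ c b i

lemma integral_gaussianMixture_mul_logb [Nonempty ι] {σ : ℝ} (hσ : σ ≠ 0) (c : ι → V)
    (b : ℝ) :
    ∫ y, gaussianMixture σ c y * logb b (gaussianMixture σ c y) =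
      ∑ i, ∫ y, rexp (-‖y - c i‖ ^ 2 / σ ^ 2) * logb b (gaussianMixture σ c y) := by
  simp_rw [gaussianMixture_mul_logb]
  exact integral_finsetSum _ fun i _ => integrable_exp_mul_logb_gaussianMixture hσ c b i

end GaussianMixture

lemma integral_gaussianC (G : ℂ → ℝ) :
    ∫ w, G w ∂gaussianC = π⁻¹ * ∫ w : ℂ, rexp (-‖w‖ ^ 2) * G w := by
  rw [gaussianC, integral_withDensity_eq_integral_toReal_smul (by fun_prop)
    (Filter.Eventually.of_forall fun _ => ENNReal.ofReal_lt_top), ← integral_const_mul]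
  refine integral_congr_ae (Filter.Eventually.of_forall fun w => ?_)
  dsimp only
  rw [ENNReal.toReal_ofReal (by positivity), smul_eq_mul, mul_assoc]

/-- Substituting `y = σ w + √s x i` turns the `i`-th summand of `∫ S log₂ S` into `g_i`. -/
lemma integral_exp_mul_logb_gaussianMixture_eq_g (M : ℕ) (x : Fin M → ℂ) {σ : ℝ} (hσ : σ ≠ 0)
    (s : ℝ) (i : Fin M) :
    ∫ y : ℂ, rexp (-‖y - (√s : ℂ) * x i‖ ^ 2 / σ ^ 2) *
        logb 2 (gaussianMixture σ (fun j => (√s : ℂ) * x j) y) = π * σ ^ 2 * g M x σ s i := by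
  have hsmul := integral_exp_neg_sq_norm_sub_div_sq_smul hσ ((√s : ℂ) * x i)
    (fun y => logb 2 (gaussianMixture σ (fun j => (√s : ℂ) * x j) y))
  simp only [smul_eq_mul, Complex.finrank_real_complex, sq_abs] at hsmul
  rw [hsmul, g, integral_gaussianC, ← mul_assoc, mul_right_comm π, mul_inv_cancel₀ pi_ne_zero,
    one_mul]
  congr 1
  refine integral_congr_ae (Filter.Eventually.of_forall fun w => ?_)
  simp only [gaussianMixture, Complex.real_smul, add_sub_assoc, mul_sub]

theorem output_differential_entropy_general (M : ℕ) (hM : 1 ≤ M) (x : Fin M → ℂ)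
    (σ : ℝ) (hσ : 0 < σ) (s : ℝ) (p : ℂ → ℝ)
    (hp : ∀ y : ℂ, p y = (1 / (M * π * σ ^ 2)) *
      ∑ i : Fin M, Real.exp (-(‖y - (Real.sqrt s : ℂ) * x i‖) ^ 2 / σ ^ 2)) :
    -∫ y : ℂ, p y * Real.logb 2 (p y) =
      Real.logb 2 M + Real.logb 2 (π * σ ^ 2)
        - (1 / (M : ℝ)) * ∑ i : Fin M, g M x σ s i := by
  have : Nonempty (Fin M) := ⟨⟨0, hM⟩⟩
  have hM0 : (0 : ℝ) < M := by exact_mod_cast hM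
  have hπσ : 0 < π * σ ^ 2 := by positivity
  let c : Fin M → ℂ := fun i => (√s : ℂ) * x i
  have hpc : p = fun y => 1 / (M * π * σ ^ 2) * gaussianMixture σ c y := funext hp
  rw [hpc, integral_const_mul_mul_logb_const_mul (by positivity)
      (fun y => (gaussianMixture_pos σ c y).ne') (integrable_gaussianMixture hσ.ne' c) 2
      (integrable_gaussianMixture_mul_logb hσ.ne' c 2),
    integral_gaussianMixture hσ.ne' c, integral_gaussianMixture_mul_logb hσ.ne' c 2]
  simp only [c, integral_exp_mul_logb_gaussianMixture_eq_g M x hσ.ne' s, ← mul_sum,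
    Complex.finrank_real_complex, Fintype.card_fin]
  have hlog : logb 2 (1 / (M * π * σ ^ 2)) = -(logb 2 M + logb 2 (π * σ ^ 2)) := by
    rw [one_div, logb_inv, mul_assoc, logb_mul hM0.ne' hπσ.ne']
  have hrpow : (π * σ ^ 2) ^ ((2 : ℕ) / 2 : ℝ) = π * σ ^ 2 := by norm_num
  rw [hlog, hrpow]
  field_simp
  ring

theorem output_differential_entropy (M : ℕ) (hM : 1 ≤ M) (x : Fin M → ℂ)
    (σ : ℝ) (hσ : 0 < σ) (s : ℝ) (hs : 0 ≤ s) (p : ℂ → ℝ)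
    (hp : ∀ y : ℂ, p y = (1 / (M * π * σ ^ 2)) *
      ∑ i : Fin M, Real.exp (-(‖y - (Real.sqrt s : ℂ) * x i‖) ^ 2 / σ ^ 2)) :
    -∫ y : ℂ, p y * Real.logb 2 (p y) =
      Real.logb 2 M + Real.logb 2 (π * σ ^ 2)
        - (1 / (M : ℝ)) * ∑ i : Fin M, g M x σ s i :=
  output_differential_entropy_general M hM x σ hσ s p hp
end
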